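/- arXiv:2212.11047 — 3 statements merged into one kernel-verified Lean document; each statement's English description precedes it below -/
import Mathlib

section
/- There is no fixed inequality between aggregated fitness and relative fitness: there exist a place p and event logs L1, L2 such that f_agg^{L1}(p) < f_rel^{L1}(p) and f_agg^{L2}(p) > f_rel^{L2}(p). Concretely, for p=(a | b,c): with L1 = [⟨a,b⟩^90, ⟨x,y⟩^20, ⟨c⟩^10] we have f_agg = 0 < 9/10 = f_rel, and with L2 = [⟨a,b,a,c⟩^33, ⟨x⟩^1, ⟨b⟩^33, ⟨c⟩^33] we have f_agg = 1/2 > 1/3 = f_rel. -/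
open scoped Classical

variable {A : Type*} [DecidableEq A]

/-- Number of elements of list `l` that belong to `S`. -/
def cnt (S : Finset A) (l : List A) : ℕ :=
  l.countP (fun a => decide (a ∈ S))

/-- A trace is underfed w.r.t. place `(I|O)` iff at some prefix more tokens are
consumed by `O` than have been produced by `I`. -/
def Underfed (I O : Finset A) (σ : List A) : Prop :=
  ∃ k, 1 ≤ k ∧ k ≤ σ.length ∧ cnt I (σ.take (k - 1)) < cnt O (σ.take k)

/-- A trace is overfed w.r.t. `(I|O)` iff more tokens are produced than consumed overall. -/
def Overfed (I O : Finset A) (σ : List A) : Prop :=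
  cnt O σ < cnt I σ

/-- Fitting = neither underfed nor overfed. -/
def Fitting (I O : Finset A) (σ : List A) : Prop :=
  ¬ Underfed I O σ ∧ ¬ Overfed I O σ

noncomputable def underfedL (L : Multiset (List A)) (I O : Finset A) : Multiset (List A) :=
  L.filter (Underfed I O)

noncomputable def overfedL (L : Multiset (List A)) (I O : Finset A) : Multiset (List A) :=
  L.filter (Overfed I O)

noncomputable def fittingL (L : Multiset (List A)) (I O : Finset A) : Multiset (List A) :=
  L.filter (Fitting I O)

/-- Traces of `L` activated by the activity set `S`. -/
noncomputable def actL (L : Multiset (List A)) (S : Finset A) : Multiset (List A) :=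
  L.filter (fun σ => ∃ a ∈ S, a ∈ σ)

/-- Absolute fitness. -/
noncomputable def fAbs (L : Multiset (List A)) (I O : Finset A) : ℝ :=
  ((fittingL L I O).card : ℝ) / (Multiset.card L : ℝ)

/-- Relative fitness. -/
noncomputable def fRel (L : Multiset (List A)) (I O : Finset A) : ℝ :=
  (((actL L (I ∪ O)) ∩ (fittingL L I O)).card : ℝ) / ((actL L (I ∪ O)).card : ℝ)

/-- Aggregated fitness. -/
noncomputable def fAgg (L : Multiset (List A)) (I O : Finset A) (h : (I ∪ O).Nonempty) : ℝ :=
  (I ∪ O).inf' h (fun a =>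
    (((actL L {a}) ∩ (fittingL L I O)).card : ℝ) / ((actL L {a}).card : ℝ))

/-- `p = (a | b,c)` with `a = 0, b = 1, c = 2, x = 3, y = 4`. -/
def I0 : Finset ℕ := {0}
def O0 : Finset ℕ := {1, 2}

noncomputable def Lone : Multiset (List ℕ) :=
  Multiset.replicate 90 [0, 1] + Multiset.replicate 20 [3, 4] + Multiset.replicate 10 [2]

noncomputable def Ltwo : Multiset (List ℕ) :=
  Multiset.replicate 33 [0, 1, 0, 2] + Multiset.replicate 1 [3] +
    Multiset.replicate 33 [1] + Multiset.replicate 33 [2]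

/-!
Token replay on `p = (a | b,c)` shows that `⟨a,b⟩` and `⟨a,b,a,c⟩` fit, while `⟨b⟩` and `⟨c⟩` are
underfed at their first event. In `L1` the ten unfitting traces `⟨c⟩` are all the traces
containing `c`, which forces the aggregated fitness to `0`, yet they are only a tenth of the
traces touching the place. In `L2` the unfitting traces `⟨b⟩` and `⟨c⟩` only halve the fitness
of `b` and of `c`, but make up two thirds of the traces touching the place.
-/

theorem Multiset.card_filter_replicate {α : Type*} (p : α → Prop) [DecidablePred p] (n : ℕ)
    (a : α) : card ((replicate n a).filter p) = if p a then n else 0 := by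
  by_cases h : p a <;> simp [← coe_replicate, h]

theorem Multiset.filter_inter_filter {α : Type*} [DecidableEq α] (p q : α → Prop)
    [DecidablePred p] [DecidablePred q] (s : Multiset α) :
    s.filter p ∩ s.filter q = s.filter (fun x => p x ∧ q x) := by
  ext a
  simp only [count_inter, count_filter]
  split_ifs <;> simp_all

section TokenReplay

variable {I O : Finset A} {σ : List A}

theorem underfed_iff :
    Underfed I O σ ↔ ∃ k < σ.length, cnt I (σ.take k) < cnt O (σ.take (k + 1)) := by
  constructor
  · rintro ⟨k, hk1, hkn, hlt⟩
    exact ⟨k - 1, by omega, by rwa [Nat.sub_add_cancel hk1]⟩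
  · rintro ⟨k, hk, hlt⟩
    exact ⟨k + 1, by omega, hk, by simpa using hlt⟩

/-- The bounded quantifier makes fitting of a concrete trace decidable by `decide`. -/
theorem fitting_iff :
    Fitting I O σ ↔
      (∀ k < σ.length, cnt O (σ.take (k + 1)) ≤ cnt I (σ.take k)) ∧ cnt I σ ≤ cnt O σ := by
  simp only [Fitting, underfed_iff, Overfed, not_exists, not_and, not_lt]

theorem actL_inter_fittingL (L : Multiset (List A)) (S : Finset A) :
    actL L S ∩ fittingL L I O = L.filter (fun σ => (∃ a ∈ S, a ∈ σ) ∧ Fitting I O σ) :=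
  Multiset.filter_inter_filter _ _ L

end TokenReplay

noncomputable def actFitness (L : Multiset (List A)) (I O : Finset A) (a : A) : ℝ :=
  ((actL L {a} ∩ fittingL L I O).card : ℝ) / ((actL L {a}).card : ℝ)

theorem fAgg_eq_inf'_actFitness (L : Multiset (List A)) (I O : Finset A)
    (h : (I ∪ O).Nonempty) : fAgg L I O h = (I ∪ O).inf' h (actFitness L I O) :=
  rfl

theorem I0_union_O0 : I0 ∪ O0 = {0, 1, 2} := by decide

theorem fAgg_I0_O0 (L : Multiset (List ℕ)) (h : (I0 ∪ O0).Nonempty) :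
    fAgg L I0 O0 h =
      min (actFitness L I0 O0 0) (min (actFitness L I0 O0 1) (actFitness L I0 O0 2)) := by
  rw [fAgg_eq_inf'_actFitness, Finset.inf'_congr h I0_union_O0 (fun _ _ => rfl),
    Finset.inf'_insert (H := Finset.insert_nonempty 1 {2}),
    Finset.inf'_insert (H := Finset.singleton_nonempty 2), Finset.inf'_singleton]

theorem fitting_ab : Fitting I0 O0 [0, 1] := by rw [fitting_iff]; decide

theorem fitting_abac : Fitting I0 O0 [0, 1, 0, 2] := by rw [fitting_iff]; decide

theorem not_fitting_b : ¬ Fitting I0 O0 [1] := by rw [fitting_iff]; decide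

theorem not_fitting_c : ¬ Fitting I0 O0 [2] := by rw [fitting_iff]; decide

theorem fAgg_Lone (h : (I0 ∪ O0).Nonempty) : fAgg Lone I0 O0 h = 0 := by
  simp only [fAgg_I0_O0, actFitness, actL_inter_fittingL]
  simp only [actL, Lone, Multiset.filter_add, Multiset.card_add, Multiset.card_filter_replicate]
  simp [fitting_ab, not_fitting_c]

theorem fRel_Lone : fRel Lone I0 O0 = 9 / 10 := by
  rw [fRel, actL_inter_fittingL]
  simp only [actL, Lone, Multiset.filter_add, Multiset.card_add, Multiset.card_filter_replicate]
  simp [I0_union_O0, fitting_ab, not_fitting_c]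
  norm_num

theorem fAgg_Ltwo (h : (I0 ∪ O0).Nonempty) : fAgg Ltwo I0 O0 h = 1 / 2 := by
  simp only [fAgg_I0_O0, actFitness, actL_inter_fittingL]
  simp only [actL, Ltwo, Multiset.filter_add, Multiset.card_add, Multiset.card_filter_replicate]
  simp [fitting_abac, not_fitting_b, not_fitting_c]
  norm_num

theorem fRel_Ltwo : fRel Ltwo I0 O0 = 1 / 3 := by
  rw [fRel, actL_inter_fittingL]
  simp only [actL, Ltwo, Multiset.filter_add, Multiset.card_add, Multiset.card_filter_replicate]
  simp [I0_union_O0, fitting_abac, not_fitting_b, not_fitting_c]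
  norm_num

theorem no_fixed_inequality_agg_rel (h : (I0 ∪ O0).Nonempty) :
    fAgg Lone I0 O0 h = 0 ∧ fRel Lone I0 O0 = 9 / 10 ∧
    fAgg Ltwo I0 O0 h = 1 / 2 ∧ fRel Ltwo I0 O0 = 1 / 3 ∧
    fAgg Lone I0 O0 h < fRel Lone I0 O0 ∧
    fRel Ltwo I0 O0 < fAgg Ltwo I0 O0 h := by
  rw [fAgg_Lone, fRel_Lone, fAgg_Ltwo, fRel_Ltwo]
  norm_num
end

section
/- If a place p=(I|O) is underfed with respect to log L and threshold τ under the aggregated-fitness criterion, then any place p'=(I|O') with O ⊆ O' is also underfed under the aggregated-fitness criterion (with respect to L and τ). -/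
open scoped Classical

variable {A : Type*} [DecidableEq A]

/-- Aggregated-underfed criterion w.r.t. a log and threshold `τ`. -/
noncomputable def AggUnderfed (L : Multiset (List A)) (I O : Finset A) (τ : ℝ) : Prop :=
  ∃ a ∈ I ∪ O,
    1 - τ < (((actL L {a}) ∩ underfedL L I O).card : ℝ) / ((actL L {a}).card : ℝ)

theorem cnt_mono {S T : Finset A} (hST : S ⊆ T) (l : List A) : cnt S l ≤ cnt T l :=
  List.countP_mono_left fun _ _ hx => by simpa using hST (by simpa using hx)

theorem Underfed.mono_right {I O O' : Finset A} (hO : O ⊆ O') {σ : List A}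
    (h : Underfed I O σ) : Underfed I O' σ := by
  obtain ⟨k, hk1, hkσ, hlt⟩ := h
  exact ⟨k, hk1, hkσ, hlt.trans_le (cnt_mono hO _)⟩

theorem underfedL_mono_right (L : Multiset (List A)) (I : Finset A) {O O' : Finset A}
    (hO : O ⊆ O') : underfedL L I O ≤ underfedL L I O' :=
  Multiset.monotone_filter_right L fun _ => Underfed.mono_right hO

theorem agg_underfed_monotone_general (L : Multiset (List A)) (I O O' : Finset A) (τ : ℝ)
    (hO : O ⊆ O')
    (h : AggUnderfed L I O τ) :
    AggUnderfed L I O' τ := by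
  obtain ⟨a, ha, hlt⟩ := h
  refine ⟨a, Finset.union_subset_union_right hO ha, hlt.trans_le ?_⟩
  have hcard : ((actL L {a}) ∩ underfedL L I O).card ≤ ((actL L {a}) ∩ underfedL L I O').card :=
    Multiset.card_mono (inf_le_inf_left _ (underfedL_mono_right L I hO))
  exact div_le_div_of_nonneg_right (by exact_mod_cast hcard) (Nat.cast_nonneg _)

theorem agg_underfed_monotone (L : Multiset (List A)) (I O O' : Finset A) (τ : ℝ)
    (hτ0 : 0 ≤ τ) (hτ1 : τ ≤ 1) (hO : O ⊆ O')
    (hact : ∀ a ∈ I ∪ O ∪ O', actL L {a} ≠ 0)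
    (h : AggUnderfed L I O τ) :
    AggUnderfed L I O' τ :=
  agg_underfed_monotone_general L I O O' τ hO h
end

section
/- If a place p=(I|O) is overfed with respect to log L and threshold τ under the aggregated-fitness criterion, then any place p''=(I''|O) with I ⊆ I'' is also overfed under the aggregated-fitness criterion. -/
open scoped Classical

variable {A : Type*} [DecidableEq A]

/-- Aggregated-overfed criterion w.r.t. a log and threshold `τ`. -/
noncomputable def AggOverfed (L : Multiset (List A)) (I O : Finset A) (τ : ℝ) : Prop :=
  ∃ a ∈ I ∪ O,
    1 - τ < (((actL L {a}) ∩ overfedL L I O).card : ℝ) / ((actL L {a}).card : ℝ)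

theorem agg_overfed_monotone (L : Multiset (List A)) (I I'' O : Finset A) (τ : ℝ)
    (hτ0 : 0 ≤ τ) (hτ1 : τ ≤ 1) (hI : I ⊆ I'')
    (hact : ∀ a ∈ I ∪ I'' ∪ O, actL L {a} ≠ 0)
    (h : AggOverfed L I O τ) :
    AggOverfed L I'' O τ := by
  obtain ⟨a, ha, hlt⟩ := h
  refine ⟨a, ?_, ?_⟩
  · rcases Finset.mem_union.mp ha with h1 | h2
    · exact Finset.mem_union_left _ (hI h1)
    · exact Finset.mem_union_right _ h2
  · have hcnt : ∀ σ : List A, cnt I σ ≤ cnt I'' σ := by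
      intro σ
      apply List.countP_mono_left
      intro x hx hdx
      simp only [decide_eq_true_eq] at *
      exact hI hdx
    have hmono : overfedL L I O ≤ overfedL L I'' O := by
      apply Multiset.monotone_filter_right
      intro σ hσ
      exact lt_of_lt_of_le hσ (hcnt σ)
    have hcard : ((actL L {a} ∩ overfedL L I O).card : ℝ)
        ≤ ((actL L {a} ∩ overfedL L I'' O).card : ℝ) := by
      exact_mod_cast Multiset.card_le_card
        (inf_le_inf_left _ hmono)
    have hpos : (0 : ℝ) < ((actL L {a}).card : ℝ) := by
      have : actL L {a} ≠ 0 := by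
        apply hact
        rcases Finset.mem_union.mp ha with h1 | h2
        · exact Finset.mem_union_left _ (Finset.mem_union_left _ h1)
        · exact Finset.mem_union_right _ h2
      have : 0 < Multiset.card (actL L {a}) := Multiset.card_pos.mpr this
      exact_mod_cast this
    exact lt_of_lt_of_le hlt ((div_le_div_iff_of_pos_right hpos).mpr hcard)
end
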